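/- For PSD matrices A, B ∈ ℝ^{M×M}, the nuclear norm of their difference dominates the squared Frobenius norm of the difference of their square roots: ‖A − B‖_* ≥ ‖A^{1/2} − B^{1/2}‖_F². -/

import Mathlib

open Matrix

lemma real_conjTranspose_eq {m n : ℕ} (A : Matrix (Fin m) (Fin n) ℝ) : Aᴴ = Aᵀ := rfl

lemma psd_tmul {m n : ℕ} (A : Matrix (Fin m) (Fin n) ℝ) : (Aᵀ * A).PosSemidef := by
  have h := Matrix.posSemidef_conjTranspose_mul_self A
  rwa [real_conjTranspose_eq] at h

lemma psd_gram {m n : ℕ} (A : Matrix (Fin m) (Fin n) ℝ) : (A * Aᵀ).PosSemidef := by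
  have h := Matrix.posSemidef_self_mul_conjTranspose A
  rwa [real_conjTranspose_eq] at h

namespace Matrix.PosSemidef

open scoped ComplexOrder

variable {n 𝕜 : Type*} [Fintype n] [RCLike 𝕜] [DecidableEq n] {A : Matrix n n 𝕜}

/-- The positive semidefinite square root of a positive semidefinite matrix -/
noncomputable def sqrt (hA : PosSemidef A) : Matrix n n 𝕜 :=
  hA.1.eigenvectorUnitary.1 * diagonal ((↑) ∘ (√·) ∘ hA.1.eigenvalues) *
  (star hA.1.eigenvectorUnitary : Matrix n n 𝕜)

lemma posSemidef_sqrt (hA : PosSemidef A) : PosSemidef hA.sqrt := by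
  apply PosSemidef.mul_mul_conjTranspose_same
  refine posSemidef_diagonal_iff.mpr fun i ↦ ?_
  rw [Function.comp_apply, RCLike.nonneg_iff]
  constructor
  · simp only [RCLike.ofReal_re]
    exact Real.sqrt_nonneg _
  · simp only [RCLike.ofReal_im]

end Matrix.PosSemidef

lemma psd_sand {M : ℕ} {Kx Ky : Matrix (Fin M) (Fin M) ℝ} (hx : Kx.PosSemidef) (hy : Ky.PosSemidef) :
    (hx.sqrt * Ky * hx.sqrt).PosSemidef := by
  have h := hy.mul_mul_conjTranspose_same hx.sqrt
  rwa [hx.posSemidef_sqrt.isHermitian.eq] at h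

/-- Nuclear norm: sum of singular values, i.e. `Tr[(AᵀA)^{1/2}]`. -/
noncomputable def nuclearNorm {m n : ℕ} (A : Matrix (Fin m) (Fin n) ℝ) : ℝ :=
  (Matrix.PosSemidef.sqrt (psd_tmul A)).trace

/-- Frobenius norm. -/
noncomputable def frobNorm {m n : ℕ} (A : Matrix (Fin m) (Fin n) ℝ) : ℝ :=
  Real.sqrt (Matrix.trace (Aᵀ * A))

/-- Fidelity `Tr[(Kx^{1/2} Ky Kx^{1/2})^{1/2}]` between PSD matrices. -/
noncomputable def fidelity {M : ℕ} {Kx Ky : Matrix (Fin M) (Fin M) ℝ}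
    (hx : Kx.PosSemidef) (hy : Ky.PosSemidef) : ℝ :=
  (Matrix.PosSemidef.sqrt (psd_sand hx hy)).trace

/-!
Write `X = √A - √B` and `Y = √A + √B`, so that `XY + YX = 2(A - B)`. The sign `S` of `X`
commutes with `X` and `SX = |X|`, hence `tr(S(A - B)) = tr(|X|Y)`, and
`tr(|X|Y) - tr(X²) = 2 tr(X⁺√B) + 2 tr(X⁻√A) ≥ 0`. Finally `-1 ≤ S ≤ 1` gives
`tr(S(A - B)) ≤ tr|A - B|`, which is the nuclear norm.
-/

open scoped MatrixOrder
open CFC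

namespace Matrix

variable {n : Type*} [Fintype n] [DecidableEq n]

lemma PosSemidef.sqrt_eq_cfcSqrt {A : Matrix n n ℝ} (hA : A.PosSemidef) :
    hA.sqrt = CFC.sqrt A := by
  rw [CFC.sqrt_eq_cfc, cfc_nnreal_eq_real _ A (nonneg_iff_posSemidef.mpr hA), hA.1.cfc_eq,
    IsHermitian.cfc, Unitary.conjStarAlgAut_apply, PosSemidef.sqrt]
  congr 3
  ext i
  simp [Real.coe_sqrt, Real.coe_toNNReal', hA.eigenvalues_nonneg]

lemma trace_mul_nonneg {P Q : Matrix n n ℝ} (hP : 0 ≤ P) (hQ : 0 ≤ Q) :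
    0 ≤ (P * Q).trace := by
  have h : 0 ≤ CFC.sqrt P * Q * CFC.sqrt P := conjugate_nonneg_of_nonneg hQ (sqrt_nonneg P)
  calc 0 ≤ (CFC.sqrt P * Q * CFC.sqrt P).trace := (nonneg_iff_posSemidef.mp h).trace_nonneg
    _ = (P * Q).trace := by rw [trace_mul_cycle, sqrt_mul_sqrt_self P]

lemma trace_mul_le_trace_abs {S C : Matrix n n ℝ} (hS₁ : -1 ≤ S) (hS₂ : S ≤ 1)
    (hC : IsSelfAdjoint C) : (S * C).trace ≤ (CFC.abs C).trace := by
  have h₁ : 0 ≤ ((1 - S) * C⁺).trace :=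
    trace_mul_nonneg (sub_nonneg.2 hS₂) (posPart_nonneg C)
  have h₂ : 0 ≤ ((1 + S) * C⁻).trace :=
    trace_mul_nonneg (neg_le_iff_add_nonneg'.1 hS₁) (negPart_nonneg C)
  simp only [sub_mul, add_mul, one_mul, trace_sub, trace_add] at h₁ h₂
  calc (S * C).trace = (S * (C⁺ - C⁻)).trace := by rw [CFC.posPart_sub_negPart C]
    _ ≤ (C⁺ + C⁻).trace := by
        rw [mul_sub, trace_sub, trace_add]
        linarith
    _ = (CFC.abs C).trace := by rw [CFC.posPart_add_negPart C]

lemma trace_mul_self_le_trace_abs_mul_add {P Q : Matrix n n ℝ} (hP : 0 ≤ P) (hQ : 0 ≤ Q) :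
    ((P - Q) * (P - Q)).trace ≤ (CFC.abs (P - Q) * (P + Q)).trace := by
  have hX : IsSelfAdjoint (P - Q) :=
    (IsSelfAdjoint.of_nonneg hP).sub (IsSelfAdjoint.of_nonneg hQ)
  have h₁ := trace_mul_nonneg (posPart_nonneg (P - Q)) hQ
  have h₂ := trace_mul_nonneg (negPart_nonneg (P - Q)) hP
  calc ((P - Q) * (P - Q)).trace = (((P - Q)⁺ - (P - Q)⁻) * (P - Q)).trace := by
        rw [CFC.posPart_sub_negPart (P - Q)]
    _ ≤ (((P - Q)⁺ + (P - Q)⁻) * (P + Q)).trace := by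
        simp only [sub_mul, add_mul, mul_sub, mul_add, trace_sub, trace_add]
        linarith
    _ = (CFC.abs (P - Q) * (P + Q)).trace := by rw [CFC.posPart_add_negPart (P - Q)]

section Sign

variable {X : Matrix n n ℝ}

lemma neg_one_le_cfc_sign (hX : IsSelfAdjoint X) :
    -1 ≤ cfc (fun x => (SignType.sign x : ℝ)) X := by
  simpa using algebraMap_le_cfc (fun x => (SignType.sign x : ℝ)) (-1) X
    (fun x _ => by rcases lt_trichotomy x 0 with h | h | h <;> simp [h])
    (finite_real_spectrum.continuousOn _)

lemma cfc_sign_le_one : cfc (fun x => (SignType.sign x : ℝ)) X ≤ 1 :=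
  cfc_le_one _ X fun x _ => by rcases lt_trichotomy x 0 with h | h | h <;> simp [h]

lemma cfc_sign_mul_self (hX : IsSelfAdjoint X) :
    cfc (fun x => (SignType.sign x : ℝ)) X * X = CFC.abs X := by
  calc _ = cfc (fun x => (SignType.sign x : ℝ) * x) X := by
        rw [cfc_mul _ _ X (finite_real_spectrum.continuousOn _), cfc_id' ℝ X]
    _ = CFC.abs X := by
        rw [CFC.abs_eq_cfc_norm X]
        exact cfc_congr fun x _ => sign_mul_self x

lemma self_mul_cfc_sign (hX : IsSelfAdjoint X) :
    X * cfc (fun x => (SignType.sign x : ℝ)) X = CFC.abs X := by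
  have h := (cfc_commute_cfc (fun x : ℝ => x) (fun x => (SignType.sign x : ℝ)) X).eq
  rwa [cfc_id' ℝ X, cfc_sign_mul_self hX] at h

lemma trace_cfc_sign_mul_anticommutator (hX : IsSelfAdjoint X) (Y : Matrix n n ℝ) :
    (cfc (fun x => (SignType.sign x : ℝ)) X * (X * Y + Y * X)).trace =
      2 * (CFC.abs X * Y).trace := by
  set S := cfc (fun x => (SignType.sign x : ℝ)) X
  rw [mul_add, trace_add, ← mul_assoc, cfc_sign_mul_self hX, ← mul_assoc,
    trace_mul_comm (S * Y), ← mul_assoc, self_mul_cfc_sign hX]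
  ring

end Sign

theorem trace_sub_mul_sub_le_trace_abs_mul_self_sub_mul_self {P Q : Matrix n n ℝ} (hP : 0 ≤ P)
    (hQ : 0 ≤ Q) : ((P - Q) * (P - Q)).trace ≤ (CFC.abs (P * P - Q * Q)).trace := by
  have hP' := IsSelfAdjoint.of_nonneg hP
  have hQ' := IsSelfAdjoint.of_nonneg hQ
  have hX : IsSelfAdjoint (P - Q) := hP'.sub hQ'
  have hC : IsSelfAdjoint (P * P - Q * Q) :=
    (IsSelfAdjoint.of_nonneg hP'.mul_self_nonneg).sub
      (IsSelfAdjoint.of_nonneg hQ'.mul_self_nonneg)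
  have hanti : (P - Q) * (P + Q) + (P + Q) * (P - Q) = (2 : ℝ) • (P * P - Q * Q) := by
    rw [two_smul]
    noncomm_ring
  set S := cfc (fun x => (SignType.sign x : ℝ)) (P - Q)
  calc ((P - Q) * (P - Q)).trace ≤ (CFC.abs (P - Q) * (P + Q)).trace :=
        trace_mul_self_le_trace_abs_mul_add hP hQ
    _ = (S * (P * P - Q * Q)).trace := by
        have h := trace_cfc_sign_mul_anticommutator hX (P + Q)
        rw [hanti, mul_smul_comm, trace_smul, smul_eq_mul] at h
        linarith
    _ ≤ (CFC.abs (P * P - Q * Q)).trace :=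
        trace_mul_le_trace_abs (neg_one_le_cfc_sign hX) cfc_sign_le_one hC

end Matrix

lemma nuclearNorm_eq_trace_abs {n : ℕ} (A : Matrix (Fin n) (Fin n) ℝ) :
    nuclearNorm A = (CFC.abs A).trace := by
  rw [nuclearNorm, PosSemidef.sqrt_eq_cfcSqrt]
  rfl

lemma frobNorm_sq {m n : ℕ} (A : Matrix (Fin m) (Fin n) ℝ) :
    frobNorm A ^ 2 = (Aᵀ * A).trace :=
  Real.sq_sqrt (psd_tmul A).trace_nonneg

theorem nuclearNorm_sub_ge_frobNorm_sqrt_sub_sq (M : ℕ) (A B : Matrix (Fin M) (Fin M) ℝ)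
    (hA : A.PosSemidef) (hB : B.PosSemidef) :
    nuclearNorm (A - B) ≥ (frobNorm (hA.sqrt - hB.sqrt)) ^ 2 := by
  have hsymm : (CFC.sqrt A - CFC.sqrt B)ᵀ = CFC.sqrt A - CFC.sqrt B :=
    ((IsSelfAdjoint.of_nonneg (sqrt_nonneg A)).sub
      (IsSelfAdjoint.of_nonneg (sqrt_nonneg B))).star_eq
  have hAB : A - B = CFC.sqrt A * CFC.sqrt A - CFC.sqrt B * CFC.sqrt B := by
    rw [sqrt_mul_sqrt_self A (nonneg_iff_posSemidef.mpr hA),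
      sqrt_mul_sqrt_self B (nonneg_iff_posSemidef.mpr hB)]
  rw [ge_iff_le, nuclearNorm_eq_trace_abs, frobNorm_sq, hA.sqrt_eq_cfcSqrt, hB.sqrt_eq_cfcSqrt,
    hsymm, hAB]
  exact trace_sub_mul_sub_le_trace_abs_mul_self_sub_mul_self (sqrt_nonneg A) (sqrt_nonneg B)
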